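/- Define Y^{n;t}_{a,b}(L) = Σ_{λ∈ℤ}( q^{λ²tt'+λ(t'b−2ta)} T(n, a−b−t'λ, L) − q^{(λt+b)(λt'+2a)} T(n, −a−b−t'λ, L) ) with t' = 2t+1. Then for L > 0 the recurrence Y^{n;t}_{a,b}(L) = q^{L+a−b−n} Y^{n;t}_{a,b−1}(L−1) + Y^{n;t}_{a,b}(L−1) + q^{L−a+b} Y^{n+1;t}_{a,b+1}(L−1) holds. -/

import Mathlib

/-!
Write `T(n,d,L) = Σ_k q^{k(k+d-n)} [L; k, k+d, L-2k-d]_q` with the `q`-multinomial coefficient.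
Pascal's rule for `q`-multinomials, summed over `k`, gives the trinomial recurrence
`T(n,d,L+1) = q^{L+1-d} T(n+1,d-1,L) + T(n,d,L) + q^{L+1+d-n} T(n,d+1,L)`. Applied to the two
trinomials in the `λ`-th summand of `Y^{n;t}_{a,b}(L+1)`, it produces exactly the `λ`-th summands
of the three `Y`'s on the right, so the recurrence holds summand by summand. Since `T(n,d,L) = 0`
for `|d| > L`, all summands have finite support as long as `t' ≠ 0`, and the sums may be split.
-/

/- `qq` plays the role of the formal variable `q`, as an element of the
field of rational functions over `ℚ`. -/
noncomputable def qq : RatFunc ℚ := RatFunc.X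

/-- `(q)_n = ∏_{i=1}^n (1 - q^i)`. -/
noncomputable def qp (n : ℕ) : RatFunc ℚ := ∏ i ∈ Finset.range n, (1 - qq ^ (i + 1))

/-- `(q)_n` for an integer index, declared to be `0` for negative `n`
(so that terms with a negative factorial index vanish upon division). -/
noncomputable def qpz (n : ℤ) : RatFunc ℚ := if 0 ≤ n then qp n.toNat else 0

/-- The Andrews–Baxter `q`-trinomial coefficient
`T(n,d,L) = Σ_k q^{k(k+d-n)} (q)_L / ((q)_k (q)_{k+d} (q)_{L-2k-d})`,
where terms with a negative factorial index are zero.  (Any term with a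
nonzero contribution has `k ≤ L`, so the range below suffices.) -/
noncomputable def qT (n d : ℤ) (L : ℕ) : RatFunc ℚ :=
  ∑ k ∈ Finset.range (L + 1),
    qq ^ ((k : ℤ) * ((k : ℤ) + d - n)) * qp L /
      (qp k * qpz ((k : ℤ) + d) * qpz ((L : ℤ) - 2 * k - d))

/-- `Y^{n;t}_{a,b}(L)` for `t = s/2 ∈ (1/2)ℤ` and `t' = 2t+1 = s+1`:
`Y = Σ_{λ∈ℤ} ( q^{λ²tt' + λ(t'b − 2ta)} T(n, a−b−t'λ, L)
             − q^{(λt+b)(λt'+2a)} T(n, −a−b−t'λ, L) )`.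
All exponents are integers (written in expanded form below, using that
`s(s+1)/2 ∈ ℤ`), and the bilateral sum has finite support since
`T(n,d,L) = 0` for `|d| > L`; it is rendered by `finsum`. -/
noncomputable def qY (s n a b : ℤ) (L : ℕ) : RatFunc ℚ :=
  ∑ᶠ l : ℤ,
    (qq ^ (l ^ 2 * (s * (s + 1) / 2) + l * ((s + 1) * b - s * a)) *
        qT n (a - b - (s + 1) * l) L -
      qq ^ (l ^ 2 * (s * (s + 1) / 2) + l * s * a + l * (s + 1) * b + 2 * a * b) *
        qT n (-a - b - (s + 1) * l) L)

open RatFunc in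
lemma intDegree_qq_zpow (k : ℤ) : intDegree (qq ^ k) = k := by
  have hpow (m : ℕ) : intDegree (qq ^ m) = m := by
    rw [qq, ← algebraMap_X, ← map_pow, intDegree_polynomial, Polynomial.natDegree_X_pow]
  obtain ⟨m, rfl | rfl⟩ := Int.eq_nat_or_neg k
  · rw [zpow_natCast, hpow]
  · rw [zpow_neg, zpow_natCast, intDegree_inv, hpow]

lemma qq_zpow_injective : Function.Injective fun k : ℤ => qq ^ k := fun k m h => by
  simpa only [intDegree_qq_zpow] using congrArg RatFunc.intDegree h

lemma qq_ne_zero : qq ≠ 0 := RatFunc.X_ne_zero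

lemma one_sub_qq_zpow_ne_zero {m : ℤ} (hm : m ≠ 0) : 1 - qq ^ m ≠ 0 := fun h =>
  hm (qq_zpow_injective (by simpa using (sub_eq_zero.1 h).symm) : m = 0)

lemma qpz_of_neg {m : ℤ} (hm : m < 0) : qpz m = 0 := if_neg hm.not_ge

lemma qpz_natCast (k : ℕ) : qpz k = qp k := by simp [qpz]

lemma qpz_eq_qpz_sub_one_mul {m : ℤ} (hm : 0 < m) : qpz m = qpz (m - 1) * (1 - qq ^ m) := by
  obtain ⟨k, hk⟩ := Int.eq_ofNat_of_zero_le (by omega : 0 ≤ m - 1)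
  rw [hk, show m = (k + 1 : ℕ) by omega, qpz_natCast, qpz_natCast, qp, qp, Finset.prod_range_succ]
  norm_cast

/-- For `m ≤ 0` both sides vanish, by `0⁻¹ = 0` and `1 - q⁰ = 0`. -/
lemma inv_qpz_sub_one (m : ℤ) : (qpz (m - 1))⁻¹ = (1 - qq ^ m) * (qpz m)⁻¹ := by
  rcases lt_or_ge 0 m with hm | hm
  · rw [qpz_eq_qpz_sub_one_mul hm, mul_inv, mul_left_comm,
      mul_inv_cancel₀ (one_sub_qq_zpow_ne_zero hm.ne'), mul_one]
  · rcases hm.lt_or_eq with hm | rfl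
    · simp [qpz_of_neg hm, qpz_of_neg (show m - 1 < 0 by omega)]
    · simp [qpz_of_neg (show (-1 : ℤ) < 0 by omega)]

noncomputable def qMultinomial (a b c : ℤ) : RatFunc ℚ :=
  qpz (a + b + c) * (qpz a)⁻¹ * (qpz b)⁻¹ * (qpz c)⁻¹

lemma qMultinomial_of_neg {a b c : ℤ} (h : a < 0 ∨ b < 0 ∨ c < 0) : qMultinomial a b c = 0 := by
  rcases h with h | h | h <;> simp [qMultinomial, qpz_of_neg h]

/-- From `1 - q^(a+b+c) = (1 - q^c) + q^c (1 - q^b) + q^(b+c) (1 - q^a)`. -/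
lemma qMultinomial_pascal {a b c : ℤ} (h : 0 < a + b + c) :
    qMultinomial a b c = qMultinomial a b (c - 1) + qq ^ c * qMultinomial a (b - 1) c +
      qq ^ (b + c) * qMultinomial (a - 1) b c := by
  simp only [qMultinomial, inv_qpz_sub_one, qpz_eq_qpz_sub_one_mul h,
    show ∀ x y z : ℤ, x + y + (z - 1) = x + y + z - 1 by intros; ring,
    show ∀ x y z : ℤ, x + (y - 1) + z = x + y + z - 1 by intros; ring,
    show ∀ x y z : ℤ, x - 1 + y + z = x + y + z - 1 by intros; ring,
    zpow_add₀ qq_ne_zero]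
  ring

open Finset in
lemma qT_eq_sum_qMultinomial (n d : ℤ) (L : ℕ) :
    qT n d L = ∑ k ∈ range (L + 1),
      qq ^ ((k : ℤ) * (k + d - n)) * qMultinomial k (k + d) (L - 2 * k - d) := by
  refine sum_congr rfl fun k _ => ?_
  rw [qMultinomial, show (k : ℤ) + (k + d) + (L - 2 * k - d) = L by ring, qpz_natCast,
    qpz_natCast]
  field_simp

lemma qT_eq_zero {n d : ℤ} {L : ℕ} (h : (L : ℤ) < |d|) : qT n d L = 0 := by
  rw [qT_eq_sum_qMultinomial]
  refine Finset.sum_eq_zero fun k hk => ?_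
  have := Finset.mem_range.1 hk
  rw [qMultinomial_of_neg ?_, mul_zero]
  rcases abs_cases d with ⟨hd, _⟩ | ⟨hd, _⟩ <;> omega

open Finset in
/-- Termwise Pascal's rule; the `q^(b+c)` part is reindexed by `k ↦ k + 1`. -/
lemma qT_succ (n d : ℤ) (L : ℕ) :
    qT n d (L + 1) = qq ^ ((L : ℤ) + 1 - d) * qT (n + 1) (d - 1) L + qT n d L +
      qq ^ ((L : ℤ) + 1 + d - n) * qT n (d + 1) L := by
  rw [qT_eq_sum_qMultinomial n d (L + 1)]
  conv_lhs => enter [2, k]; rw [qMultinomial_pascal (by push_cast; omega)]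
  simp only [mul_add, sum_add_distrib]
  push_cast
  have hlast : ∑ k ∈ range (L + 1 + 1),
      qq ^ ((k : ℤ) * (k + d - n)) * qMultinomial k (k + d) (L + 1 - 2 * k - d - 1) = qT n d L := by
    rw [qT_eq_sum_qMultinomial, sum_range_succ, qMultinomial_of_neg (by push_cast; omega),
      mul_zero, add_zero]
    refine sum_congr rfl fun k _ => ?_
    ring_nf
  have hmiddle : ∑ k ∈ range (L + 1 + 1), qq ^ ((k : ℤ) * (k + d - n)) *
      (qq ^ ((L : ℤ) + 1 - 2 * k - d) * qMultinomial k (k + d - 1) (L + 1 - 2 * k - d)) =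
      qq ^ ((L : ℤ) + 1 - d) * qT (n + 1) (d - 1) L := by
    rw [qT_eq_sum_qMultinomial, mul_sum, sum_range_succ, qMultinomial_of_neg (by push_cast; omega),
      mul_zero, mul_zero, add_zero]
    refine sum_congr rfl fun k _ => ?_
    rw [← mul_assoc, ← mul_assoc, ← zpow_add₀ qq_ne_zero, ← zpow_add₀ qq_ne_zero]
    ring_nf
  have hfirst : ∑ k ∈ range (L + 1 + 1), qq ^ ((k : ℤ) * (k + d - n)) *
      (qq ^ ((k : ℤ) + d + (L + 1 - 2 * k - d)) * qMultinomial (k - 1) (k + d) (L + 1 - 2 * k - d)) =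
      qq ^ ((L : ℤ) + 1 + d - n) * qT n (d + 1) L := by
    rw [qT_eq_sum_qMultinomial, mul_sum, sum_range_succ', qMultinomial_of_neg (by simp),
      mul_zero, mul_zero, add_zero]
    refine sum_congr rfl fun k _ => ?_
    rw [← mul_assoc, ← mul_assoc, ← zpow_add₀ qq_ne_zero, ← zpow_add₀ qq_ne_zero]
    push_cast
    ring_nf
  linear_combination hlast + hmiddle + hfirst

noncomputable def qYSummand (s n a b : ℤ) (L : ℕ) (l : ℤ) : RatFunc ℚ :=
  qq ^ (l ^ 2 * (s * (s + 1) / 2) + l * ((s + 1) * b - s * a)) * qT n (a - b - (s + 1) * l) L -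
    qq ^ (l ^ 2 * (s * (s + 1) / 2) + l * s * a + l * (s + 1) * b + 2 * a * b) *
      qT n (-a - b - (s + 1) * l) L

lemma qY_eq_finsum_qYSummand (s n a b : ℤ) (L : ℕ) :
    qY s n a b L = ∑ᶠ l, qYSummand s n a b L l := rfl

lemma qYSummand_succ (s n a b : ℤ) (L : ℕ) (l : ℤ) :
    qYSummand s n a b (L + 1) l =
      qq ^ ((L : ℤ) + 1 + a - b - n) * qYSummand s n a (b - 1) L l + qYSummand s n a b L l +
        qq ^ ((L : ℤ) + 1 - a + b) * qYSummand s (n + 1) a (b + 1) L l := by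
  simp only [qYSummand, qT_succ]
  generalize s * (s + 1) / 2 = σ
  simp only [mul_add, mul_sub, ← mul_assoc, ← zpow_add₀ qq_ne_zero]
  ring_nf

lemma finite_support_zpow_mul_qT {t : ℤ} (ht : t ≠ 0) (e : ℤ → ℤ) (n c : ℤ) (L : ℕ) :
    (Function.support fun l => qq ^ e l * qT n (c - t * l) L).Finite := by
  have hinj : Function.Injective fun l : ℤ => c - t * l := fun x y h =>
    mul_left_cancel₀ ht (by simpa using h)
  refine ((Set.finite_Icc (-(L : ℤ)) L).preimage hinj.injOn).subset fun l hl => ?_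
  have hT : qT n (c - t * l) L ≠ 0 := right_ne_zero_of_mul hl
  exact abs_le.1 (not_lt.1 (mt qT_eq_zero hT))

lemma finite_support_qYSummand {s : ℤ} (hs : s ≠ -1) (n a b : ℤ) (L : ℕ) :
    (Function.support (qYSummand s n a b L)).Finite :=
  ((finite_support_zpow_mul_qT (by omega) _ n (a - b) L).union
    (finite_support_zpow_mul_qT (by omega) _ n (-a - b) L)).subset (Function.support_sub _ _)

lemma infinite_support_zpow_mul_sub_zpow_mul {a : ℤ} (ha : a ≠ 0) (c : ℤ) {A B : RatFunc ℚ}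
    (hAB : A ≠ 0 ∨ B ≠ 0) :
    (Function.support fun l : ℤ => qq ^ (l * a) * A - qq ^ (c - l * a) * B).Infinite := by
  have hvanish {l : ℤ} (hl : qq ^ (l * a) * A = qq ^ (c - l * a) * B) :
      qq ^ (2 * l * a) * A = qq ^ c * B :=
    calc qq ^ (2 * l * a) * A = qq ^ (l * a) * (qq ^ (l * a) * A) := by
          rw [← mul_assoc, ← zpow_add₀ qq_ne_zero]; ring_nf
      _ = qq ^ (l * a) * (qq ^ (c - l * a) * B) := by rw [hl]
      _ = qq ^ c * B := by rw [← mul_assoc, ← zpow_add₀ qq_ne_zero]; ring_nf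
  have hvanishs :
      (Function.support fun l : ℤ => qq ^ (l * a) * A - qq ^ (c - l * a) * B)ᶜ.Subsingleton := by
    intro l hl m hm
    simp only [Set.mem_compl_iff, Function.mem_support, not_not, sub_eq_zero] at hl hm
    have hA : A ≠ 0 := by
      rintro rfl
      have := hvanish hl
      simp_all [zpow_ne_zero, qq_ne_zero]
    have := qq_zpow_injective (mul_right_cancel₀ hA ((hvanish hl).trans (hvanish hm).symm))
    simpa [ha] using this
  exact fun h => Set.infinite_univ (α := ℤ) (by simpa using h.union hvanishs.finite)

/-- For `s = -1` (that is `t' = 0`) the summand no longer decays in `λ`: it is either identically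
zero or nonzero for all but at most one `λ`, so `finsum` returns its junk value `0`. -/
lemma qY_neg_one (n a b : ℤ) (L : ℕ) : qY (-1) n a b L = 0 := by
  have hsummand (l : ℤ) : qYSummand (-1) n a b L l =
      qq ^ (l * a) * qT n (a - b) L - qq ^ (2 * a * b - l * a) * qT n (-a - b) L := by
    simp only [qYSummand]
    ring_nf
  rw [qY_eq_finsum_qYSummand, finsum_congr hsummand]
  rcases eq_or_ne a 0 with rfl | ha
  · simp
  by_cases hAB : qT n (a - b) L = 0 ∧ qT n (-a - b) L = 0
  · simp [hAB]
  · exact finsum_of_infinite_support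
      (infinite_support_zpow_mul_sub_zpow_mul ha _ (not_and_or.1 hAB))

/-- For `L > 0`:
`Y^{n;t}_{a,b}(L) = q^{L+a−b−n} Y^{n;t}_{a,b−1}(L−1) + Y^{n;t}_{a,b}(L−1)
                    + q^{L−a+b} Y^{n+1;t}_{a,b+1}(L−1)`,
where `t = s/2 ∈ (1/2)ℤ` and `a, b, n` are integers. -/
theorem qY_recurrence (s n a b : ℤ) (L : ℕ) (hL : 0 < L) :
    qY s n a b L =
      qq ^ ((L : ℤ) + a - b - n) * qY s n a (b - 1) (L - 1) + qY s n a b (L - 1) +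
        qq ^ ((L : ℤ) - a + b) * qY s (n + 1) a (b + 1) (L - 1) := by
  obtain ⟨M, rfl⟩ : ∃ M, L = M + 1 := ⟨L - 1, by omega⟩
  rw [Nat.add_sub_cancel]
  push_cast
  rcases eq_or_ne s (-1) with rfl | hs
  · simp [qY_neg_one]
  have hfin := finite_support_qYSummand hs
  have hfin_mul (c : RatFunc ℚ) (n' b' : ℤ) :
      (Function.support fun l => c * qYSummand s n' a b' M l).Finite :=
    (hfin n' a b' M).subset (Function.support_mul_subset_right _ _)
  simp only [qY_eq_finsum_qYSummand, qYSummand_succ]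
  rw [finsum_add_distrib (((hfin_mul _ _ _).union (hfin _ _ _ _)).subset
      (Function.support_add _ _)) (hfin_mul _ _ _),
    finsum_add_distrib (hfin_mul _ _ _) (hfin _ _ _ _), mul_finsum, mul_finsum]
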